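/- Let $a>r>0$, $\rho>0$, $R>0$ and $K_t = \frac{\rho}{a-r}\big((a-r+1)e^{(a-r)(T-t)}-1\big)$. For fixed $t \in [0,T)$, the map $a \mapsto K_t$ is strictly increasing in $a$ on $(r,\infty)$. -/

import Mathlib

lemma aux_exp_ineq (u : ℝ) : (1 - u) * Real.exp u ≤ 1 := by
  have h : 1 - u ≤ Real.exp (-u) := by linarith [Real.add_one_le_exp (-u)]
  calc (1 - u) * Real.exp u ≤ Real.exp (-u) * Real.exp u := by
        nlinarith [Real.exp_pos u]
    _ = 1 := by rw [← Real.exp_add]; simp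

/-- For fixed `t ∈ [0,T)`, the contract sensitivity
`a ↦ K_t = ρ/(a-r)((a-r+1)e^{(a-r)(T-t)} - 1)` is strictly increasing on `(r,∞)`. -/
theorem stmt7 (r ρ R T t : ℝ) (hr : 0 < r) (hρ : 0 < ρ) (hR : 0 < R)
    (ht : t ∈ Set.Ico 0 T) :
    StrictMonoOn (fun a => ρ / (a - r) * ((a - r + 1) * Real.exp ((a - r) * (T - t)) - 1))
      (Set.Ioi r) := by
  obtain ⟨ht0, htT⟩ := ht
  set τ := T - t with hτdef
  have hτ : 0 < τ := by simp [hτdef]; linarith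
  have key : ∀ a ∈ Set.Ioi r, HasDerivAt
      (fun a => ρ / (a - r) * ((a - r + 1) * Real.exp ((a - r) * τ) - 1))
      (ρ * (Real.exp ((a - r) * τ) * (τ * (a - r) ^ 2 + τ * (a - r) - 1) + 1) / (a - r) ^ 2)
      a := by
    intro a ha
    have hx : 0 < a - r := sub_pos.mpr ha
    have hx' : a - r ≠ 0 := ne_of_gt hx
    have h1 : HasDerivAt (fun a : ℝ => a - r) 1 a := (hasDerivAt_id a).sub_const r
    have h2 : HasDerivAt (fun a : ℝ => (a - r) * τ) τ a := by simpa using h1.mul_const τ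
    have h3 : HasDerivAt (fun a : ℝ => Real.exp ((a - r) * τ))
        (Real.exp ((a - r) * τ) * τ) a := h2.exp
    have h4 : HasDerivAt (fun a : ℝ => a - r + 1) 1 a := h1.add_const 1
    have h5 := (h4.fun_mul h3).sub_const 1
    have h7 : HasDerivAt (fun a : ℝ => ρ / (a - r))
        ((0 * (a - r) - ρ * 1) / (a - r) ^ 2) a := (hasDerivAt_const a ρ).div h1 hx'
    have := h7.fun_mul h5
    convert this using 1
    · rfl
    · rfl
    field_simp
    ring
  apply strictMonoOn_of_deriv_pos (convex_Ioi r)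
  · exact fun a ha => (key a ha).continuousAt.continuousWithinAt
  · intro a ha
    rw [interior_Ioi] at ha
    rw [(key a ha).deriv]
    have hx : 0 < a - r := sub_pos.mpr ha
    have hE : 0 < Real.exp ((a - r) * τ) := Real.exp_pos _
    have hk := aux_exp_ineq ((a - r) * τ)
    have hnum : 0 < Real.exp ((a - r) * τ) * (τ * (a - r) ^ 2 + τ * (a - r) - 1) + 1 := by
      nlinarith [mul_pos (mul_pos hτ (mul_pos hx hx)) hE]
    positivity
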